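/- arXiv:2209.07772 — 3 statements merged into one kernel-verified Lean document; each statement's English description precedes it below -/
import Mathlib

section
/- Let G be an undirected graph and let B_1, …, B_d be a path decomposition of G of width w. Then G admits a linear order of its vertices whose module-width is at most w + 2. In particular, the linear module-width of G is at most its pathwidth plus 2. -/
open Finset

/-- A path decomposition of a graph: a sequence of bags covering all vertices and all
edges, such that for `h ≤ i ≤ j`, `bag h ∩ bag j ⊆ bag i`. -/
structure PathDecomp {α : Type*} (G : SimpleGraph α) where
  d : ℕ
  bag : Fin d → Finset α
  covers : ∀ v : α, ∃ i, v ∈ bag i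
  covers_edge : ∀ ⦃u v : α⦄, G.Adj u v → ∃ i, u ∈ bag i ∧ v ∈ bag i
  interval : ∀ ⦃h i j : Fin d⦄, h ≤ i → i ≤ j → ∀ a, a ∈ bag h → a ∈ bag j → a ∈ bag i

/-- The module number of a set `S` of vertices: the number of equivalence classes of the
relation `u ∼ v ↔ N(u) \ S = N(v) \ S` on `S`. -/
def moduleNumber {V : Type*} [Fintype V] [DecidableEq V] (G : SimpleGraph V)
    [DecidableRel G.Adj] (S : Finset V) : ℕ :=
  (S.image fun u => G.neighborFinset u \ S).card

/-!
Order the vertices by the index of the first bag containing them. For a prefix `S` ending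
at a vertex `x`, every vertex of `S` with a neighbour outside `S` lies in the first bag of
`x`: its own first bag comes no later, and the bag covering the edge comes no earlier, so
the interval property applies. All other vertices of `S` have no neighbours outside `S` and
form a single class, so `S` has at most `(w + 1) + 1` classes.
-/

namespace PathDecomp

variable {α : Type*} [DecidableEq α] {G : SimpleGraph α} (pd : PathDecomp G)

lemma filter_mem_bag_nonempty (v : α) : (univ.filter fun i => v ∈ pd.bag i).Nonempty :=
  let ⟨i, hi⟩ := pd.covers v
  ⟨i, mem_filter.mpr ⟨mem_univ i, hi⟩⟩

def firstBag (v : α) : Fin pd.d :=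
  (univ.filter fun i => v ∈ pd.bag i).min' (pd.filter_mem_bag_nonempty v)

lemma mem_bag_firstBag (v : α) : v ∈ pd.bag (pd.firstBag v) :=
  (mem_filter.mp (min'_mem _ (pd.filter_mem_bag_nonempty v))).2

lemma firstBag_le_of_mem {v : α} {i : Fin pd.d} (hv : v ∈ pd.bag i) : pd.firstBag v ≤ i :=
  min'_le _ _ (mem_filter.mpr ⟨mem_univ i, hv⟩)

lemma mem_bag_of_adj {u v : α} {t : Fin pd.d} (huv : G.Adj u v)
    (hut : pd.firstBag u ≤ t) (htv : t ≤ pd.firstBag v) : u ∈ pd.bag t := by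
  obtain ⟨s, hus, hvs⟩ := pd.covers_edge huv
  exact pd.interval hut (htv.trans (pd.firstBag_le_of_mem hvs)) u (pd.mem_bag_firstBag u) hus

end PathDecomp

lemma exists_equiv_fin_monotone_comp {V β : Type*} [Fintype V] [LinearOrder β] (f : V → β) :
    ∃ σ : Fin (Fintype.card V) ≃ V, Monotone (f ∘ σ) :=
  let e := (Fintype.equivFin V).symm
  ⟨(Tuple.sort (f ∘ e)).trans e, Tuple.monotone_sort (f ∘ e)⟩

lemma mem_image_filter_le_iff {V : Type*} [DecidableEq V] {n : ℕ} (σ : Fin n ≃ V)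
    (i : Fin n) (v : V) : v ∈ (univ.filter fun j => j ≤ i).image σ ↔ σ.symm v ≤ i := by
  simp only [mem_image, mem_filter, mem_univ, true_and]
  exact ⟨fun ⟨j, hj, hjv⟩ => hjv ▸ by simpa using hj, fun h => ⟨σ.symm v, h, σ.apply_symm_apply v⟩⟩

lemma moduleNumber_le_card_add_one {V : Type*} [Fintype V] [DecidableEq V]
    (G : SimpleGraph V) [DecidableRel G.Adj] (S B : Finset V)
    (hB : ∀ u ∈ S, ∀ v ∉ S, G.Adj u v → u ∈ B) : moduleNumber G S ≤ B.card + 1 := by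
  have hsub : S.image (fun u => G.neighborFinset u \ S) ⊆
      insert ∅ ((S ∩ B).image fun u => G.neighborFinset u \ S) := by
    intro A hA
    obtain ⟨u, hu, rfl⟩ := mem_image.mp hA
    rcases (G.neighborFinset u \ S).eq_empty_or_nonempty with hempty | ⟨v, hv⟩
    · exact hempty ▸ mem_insert_self _ _
    · rw [mem_sdiff, SimpleGraph.mem_neighborFinset] at hv
      exact mem_insert_of_mem (mem_image_of_mem _ (mem_inter.mpr ⟨hu, hB u hu v hv.2 hv.1⟩))
  calc moduleNumber G S
      ≤ (insert ∅ ((S ∩ B).image fun u => G.neighborFinset u \ S)).card := card_le_card hsub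
    _ ≤ ((S ∩ B).image fun u => G.neighborFinset u \ S).card + 1 := card_insert_le _ _
    _ ≤ B.card + 1 := by
      gcongr
      exact card_image_le.trans (card_le_card inter_subset_right)

/-- if `G` has a path decomposition of width `w`, then `G` admits a linear
order of its vertices whose module-width is at most `w + 2` (every prefix of the order
has module number at most `w + 2`); in particular, the linear module-width of `G` is at
most its pathwidth plus `2`. -/
theorem exists_linear_order_moduleWidth_le_pathwidth_add_two
    {V : Type*} [Fintype V] [DecidableEq V] (G : SimpleGraph V) [DecidableRel G.Adj]
    (w : ℕ) (pd : PathDecomp G) (hpd : ∀ i, (pd.bag i).card ≤ w + 1) :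
    ∃ σ : Fin (Fintype.card V) ≃ V,
      ∀ i : Fin (Fintype.card V),
        moduleNumber G ((Finset.univ.filter fun j => j ≤ i).image σ) ≤ w + 2 := by
  obtain ⟨σ, hσ⟩ := exists_equiv_fin_monotone_comp pd.firstBag
  refine ⟨σ, fun i => ?_⟩
  have hS := mem_image_filter_le_iff σ i
  have h_in : ∀ u, σ.symm u ≤ i → pd.firstBag u ≤ pd.firstBag (σ i) := fun u hu => by
    simpa using hσ hu
  have h_out : ∀ v, ¬σ.symm v ≤ i → pd.firstBag (σ i) ≤ pd.firstBag v := fun v hv => by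
    simpa using hσ (not_le.mp hv).le
  calc moduleNumber G ((univ.filter fun j => j ≤ i).image σ)
      ≤ (pd.bag (pd.firstBag (σ i))).card + 1 :=
        moduleNumber_le_card_add_one G _ _ fun u hu v hv huv =>
          pd.mem_bag_of_adj huv (h_in u ((hS u).mp hu)) (h_out v (mt (hS v).mpr hv))
    _ ≤ w + 2 := Nat.add_le_add_right (hpd _) 1
end

section
/- If (G, w) admits a circulating orientation, then the constructed graph H admits a b-coloring with k = 2W + 3m + n + 2 colors. -/
open Finset

/-- `a` is a b-vertex of the coloring `c`: it has a neighbor in every color class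
other than its own. -/
def IsBVertex {VH : Type*} (H : SimpleGraph VH) {k : ℕ} (c : VH → Fin k) (a : VH) : Prop :=
  ∀ col : Fin k, col ≠ c a → ∃ b : VH, H.Adj a b ∧ c b = col

/-- `c` is a b-coloring of `H` with `k` colors: a proper coloring using all `k` colors
in which every color class contains a b-vertex. -/
def IsBColoring {VH : Type*} (H : SimpleGraph VH) (k : ℕ) (c : VH → Fin k) : Prop :=
  (∀ ⦃a b : VH⦄, H.Adj a b → c a ≠ c b) ∧ Function.Surjective c ∧
    ∀ col : Fin k, ∃ a : VH, c a = col ∧ IsBVertex H c a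

variable {V : Type*} [Fintype V] [DecidableEq V]

/-- `W`, the total weight of all edges. -/
def totW (G : SimpleGraph V) [DecidableRel G.Adj] (wt : Sym2 V → ℕ) : ℕ :=
  ∑ e ∈ G.edgeFinset, wt e

/-- `W_v`, the total weight of the edges incident with `v`. -/
def vertW (G : SimpleGraph V) [DecidableRel G.Adj] (wt : Sym2 V → ℕ) (v : V) : ℕ :=
  ∑ e ∈ G.edgeFinset.filter (fun e => v ∈ e), wt e

/-- `k = 2W + 3m + n + 2`. -/
def numColors (G : SimpleGraph V) [DecidableRel G.Adj] (wt : Sym2 V → ℕ) : ℕ :=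
  2 * totW G wt + 3 * G.edgeFinset.card + Fintype.card V + 2

/-- An orientation of `(G, wt)` (given by choosing a head `o e ∈ e` for every edge `e`)
is circulating if, at every vertex, the entering weight equals the leaving weight. -/
def IsCirculating (G : SimpleGraph V) [DecidableRel G.Adj] (wt : Sym2 V → ℕ)
    (o : Sym2 V → V) : Prop :=
  (∀ e ∈ G.edgeFinset, o e ∈ e) ∧
    ∀ v : V,
      ∑ e ∈ G.edgeFinset.filter (fun e => v ∈ e ∧ o e = v), wt e =
        ∑ e ∈ G.edgeFinset.filter (fun e => v ∈ e ∧ o e ≠ v), wt e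

/-- The data of the construction of the graph `H` from `(G, wt)`. -/
structure GadgetData (V : Type*) [Fintype V] [DecidableEq V]
    (G : SimpleGraph V) [DecidableRel G.Adj] (wt : Sym2 V → ℕ) where
  /-- the vertex type of `H` -/
  VH : Type*
  fintypeVH : Fintype VH
  decEqVH : DecidableEq VH
  /-- the graph `H` -/
  H : SimpleGraph VH
  decAdj : DecidableRel H.Adj
  /-- the center `s*` of the superstar -/
  sstar : VH
  /-- the leaves of the superstar -/
  Sleaves : Finset VH
  /-- the centers of the anonymous stars -/
  Acenters : Finset VH
  /-- the leaves of each anonymous star -/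
  Aleaves : VH → Finset VH
  /-- the sets `L_{e,v}` (subsets of the superstar leaves) -/
  L : Sym2 V → V → Finset VH
  /-- the copy of a vertex of `G` inside `H` -/
  orig : V → VH
  /-- the sets `P_v` -/
  P : V → Finset VH
  /-- the vertices `x_{e,v}` -/
  x : Sym2 V → V → VH
  /-- the sets `Y_e` -/
  Y : Sym2 V → Finset VH
  /-- the sets `Z_e` -/
  Z : Sym2 V → Finset VH
  /-- the vertices `q_{e,1}, q_{e,2}` -/
  q : Sym2 V → Fin 2 → VH

namespace GadgetData

variable {G : SimpleGraph V} [DecidableRel G.Adj] {wt : Sym2 V → ℕ}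

/-- The set `X = {x_{e,v} : v ∈ e ∈ E(G)}`. -/
def Xset (g : GadgetData V G wt) : Finset g.VH :=
  letI := g.fintypeVH; letI := g.decEqVH
  G.edgeFinset.biUnion fun e => (Finset.univ.filter fun v => v ∈ e).image (g.x e)

/-- The set `Q = {q_{e,1}, q_{e,2} : e ∈ E(G)}`. -/
def Qset (g : GadgetData V G wt) : Finset g.VH :=
  letI := g.decEqVH
  G.edgeFinset.biUnion fun e => {g.q e 0, g.q e 1}

/-- The parts into which the vertex set of `H` is partitioned. -/
def parts (g : GadgetData V G wt) : List (Finset g.VH) :=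
  letI := g.fintypeVH; letI := g.decEqVH
  [{g.sstar}, g.Sleaves, g.Acenters, g.Acenters.biUnion g.Aleaves,
    Finset.univ.image g.orig, Finset.univ.biUnion g.P,
    g.Xset, G.edgeFinset.biUnion g.Y, G.edgeFinset.biUnion g.Z, g.Qset]

/-- One directional specification of the adjacencies of `H`. -/
def AdjSpec (g : GadgetData V G wt) (a b : g.VH) : Prop :=
  (a = g.sstar ∧ b ∈ g.Sleaves) ∨
  (∃ s ∈ g.Acenters, a = s ∧ b ∈ g.Aleaves s) ∨
  (∃ v : V, a = g.orig v ∧ b ∈ g.P v) ∨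
  (∃ e ∈ G.edgeFinset, ∃ v : V, v ∈ e ∧ a = g.orig v ∧ (b ∈ g.L e v ∨ b ∈ g.Y e)) ∨
  (∃ e ∈ G.edgeFinset, ∃ v : V, v ∈ e ∧ a = g.x e v ∧
    (b ∈ g.Y e ∨ b ∈ g.Z e ∨ b ∈ g.L e v)) ∨
  (∃ e ∈ G.edgeFinset, a = g.q e 0 ∧ b = g.q e 1) ∨
  (∃ e ∈ G.edgeFinset, ∃ h : Fin 2, a = g.q e h ∧
    (b ∈ g.Z e ∨ (∃ v : V, v ∈ e ∧ b ∈ g.L e v) ∨ (∃ v : V, v ∈ e ∧ b = g.x e v)))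

/-- Degree in `H`. -/
def deg (g : GadgetData V G wt) (a : g.VH) : ℕ :=
  letI := g.fintypeVH; letI := g.decEqVH; letI := g.decAdj
  g.H.degree a

/-- The set `{s*} ∪ V(G) ∪ Q ∪ A ∪ X`. -/
def bigSet (g : GadgetData V G wt) : Finset g.VH :=
  letI := g.fintypeVH; letI := g.decEqVH
  {g.sstar} ∪ Finset.univ.image g.orig ∪ g.Qset ∪ g.Acenters ∪ g.Xset

end GadgetData

/-- The construction of the graph `H` from `(G, wt)`: the data together with all the
requirements (sizes of the parts, their disjointness, and the adjacency relation). -/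
structure Gadget (V : Type*) [Fintype V] [DecidableEq V]
    (G : SimpleGraph V) [DecidableRel G.Adj] (wt : Sym2 V → ℕ)
    extends GadgetData V G wt where
  card_Sleaves : Sleaves.card = numColors G wt - 1
  card_Acenters : Acenters.card = 2 * totW G wt + 1
  card_Aleaves : ∀ s ∈ Acenters, (Aleaves s).card = numColors G wt - 1
  Aleaves_disjoint : ∀ s ∈ Acenters, ∀ s' ∈ Acenters, s ≠ s' →
    Disjoint (Aleaves s) (Aleaves s')
  L_subset : ∀ e ∈ G.edgeFinset, ∀ v ∈ e, L e v ⊆ Sleaves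
  card_L : ∀ e ∈ G.edgeFinset, ∀ v ∈ e, (L e v).card = wt e
  L_disjoint : ∀ e ∈ G.edgeFinset, ∀ v ∈ e, ∀ e' ∈ G.edgeFinset, ∀ v' ∈ e',
    (e, v) ≠ (e', v') → Disjoint (L e v) (L e' v')
  card_P : ∀ v : V, 2 * (P v).card + 3 * vertW G wt v + 2 = 2 * numColors G wt
  card_Y : ∀ e ∈ G.edgeFinset, (Y e).card = wt e
  card_Z : ∀ e ∈ G.edgeFinset, (Z e).card + 2 * wt e + 3 = numColors G wt
  orig_inj : Function.Injective orig
  P_disjoint : ∀ v v' : V, v ≠ v' → Disjoint (P v) (P v')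
  x_inj : ∀ e ∈ G.edgeFinset, ∀ v ∈ e, ∀ e' ∈ G.edgeFinset, ∀ v' ∈ e',
    x e v = x e' v' → (e, v) = (e', v')
  Y_disjoint : ∀ e ∈ G.edgeFinset, ∀ e' ∈ G.edgeFinset, e ≠ e' → Disjoint (Y e) (Y e')
  Z_disjoint : ∀ e ∈ G.edgeFinset, ∀ e' ∈ G.edgeFinset, e ≠ e' → Disjoint (Z e) (Z e')
  q_inj : ∀ e ∈ G.edgeFinset, ∀ h : Fin 2, ∀ e' ∈ G.edgeFinset, ∀ h' : Fin 2,
    q e h = q e' h' → (e, h) = (e', h')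
  parts_disjoint : toGadgetData.parts.Pairwise Disjoint
  parts_cover : ∀ a : VH, ∃ p ∈ toGadgetData.parts, a ∈ p
  adj_iff : ∀ a b : VH, H.Adj a b ↔
    toGadgetData.AdjSpec a b ∨ toGadgetData.AdjSpec b a

/-!
Colour `s*`, the centre of every anonymous star, every vertex `v` of `G`, every `q_{e,h}`, and
the pair `x_{e,u}, x_{e,v}` each with a colour of its own: that is `1 + (2W + 1) + n + 2m + m = k`
colours. The `2W` leaves in the sets `L_{e,v}` get distinct anonymous colours, and `Y_e` repeats
the colours of `L_{e,h}` where `h` is the head of `e`. Every centre then becomes a b-vertex once its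
remaining leaves (`P_v`, `Z_e`, the other star leaves) take exactly the colours it does not see yet:
`x_{e,t}` at the tail `t` sees the colours of `L_{e,t}` directly and those of `L_{e,h}` through
`Y_e`, and `v` sees `W_v` colours on its sets `L_{e,v}` plus its out-weight through the `Y_e` of the
edges leaving it. Circulation makes the out-weight `W_v / 2`, so exactly
`|P_v| = k - 1 - 3W_v/2` colours are left for `P_v`.
-/

open Function

theorem Set.exists_eqOn_of_pairwise_disjoint {ι α β : Type*} [Nonempty β] {s : ι → Set α}
    (hs : Pairwise (Disjoint on s)) (f : ι → α → β) :
    ∃ c : α → β, ∀ i, Set.EqOn c (f i) (s i) := by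
  classical
  refine ⟨fun a => if h : ∃ i, a ∈ s i then f h.choose a else Classical.arbitrary β,
    fun i a ha => ?_⟩
  have h : ∃ i, a ∈ s i := ⟨i, ha⟩
  obtain rfl : h.choose = i := hs.eq (Set.not_disjoint_iff.2 ⟨a, h.choose_spec, ha⟩)
  exact dif_pos h

namespace Finset

variable {ι α β : Type*}

theorem exists_bijOn_of_card_eq [Nonempty β] {s : Finset α} {t : Finset β} (h : #s = #t) :
    ∃ f : α → β, Set.BijOn f s t :=
  s.finite_toSet.exists_bijOn_of_encard_eq (by simp [h])

theorem exists_bijOn_of_pairwise_disjoint [Nonempty β] {s : ι → Finset α}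
    {t : ι → Finset β} (hs : Pairwise (Disjoint on s)) (hcard : ∀ i, #(s i) = #(t i)) :
    ∃ f : α → β, ∀ i, Set.BijOn f (s i) (t i) := by
  choose f hf using fun i => exists_bijOn_of_card_eq (hcard i)
  obtain ⟨c, hc⟩ := Set.exists_eqOn_of_pairwise_disjoint
    (s := fun i => (s i : Set α)) (fun i j hij => disjoint_coe.2 (hs hij)) f
  exact ⟨c, fun i => (hf i).congr (hc i).symm⟩

theorem exists_bijOn_mapsTo [DecidableEq α] [DecidableEq β] [Nonempty β]
    {s' s : Finset α} {t' t : Finset β} (hs : s' ⊆ s) (ht : t' ⊆ t) (hcard : #s = #t)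
    (hle : #s' ≤ #t') : ∃ f : α → β, Set.BijOn f s t ∧ Set.MapsTo f s' t' := by
  obtain ⟨u, hut', hu⟩ := exists_subset_card_eq hle
  obtain ⟨f, hf⟩ := exists_bijOn_of_pairwise_disjoint (s := ![s', s \ s']) (t := ![u, t \ u])
    (by simp [Pairwise, Fin.forall_fin_two, disjoint_sdiff, sdiff_disjoint, onFun])
    (by simp [Fin.forall_fin_two, hu, card_sdiff_of_subset hs,
      card_sdiff_of_subset (hut'.trans ht), hcard])
  have h₀ : Set.BijOn f s' u := hf 0
  have h₁ : Set.BijOn f ↑(s \ s') ↑(t \ u) := hf 1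
  have hinj : Set.InjOn f ↑(s' ∪ s \ s') := by
    rw [coe_union, Set.injOn_union (disjoint_coe.2 disjoint_sdiff)]
    exact ⟨h₀.injOn, h₁.injOn, fun x hx y hy hxy =>
      (mem_sdiff.1 (h₁.mapsTo hy)).2 (hxy ▸ h₀.mapsTo hx)⟩
  have := h₀.union h₁ (by rwa [← coe_union])
  rw [← coe_union, ← coe_union, union_sdiff_of_subset hs,
    union_sdiff_of_subset (hut'.trans ht)] at this
  exact ⟨f, this, h₀.mapsTo.mono_right hut'⟩

theorem exists_eqOn_of_pairwise_disjoint_list [DecidableEq α] [Nonempty β] :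
    ∀ l : List (Finset α × (α → β)), (l.map Prod.fst).Pairwise Disjoint →
      ∃ c : α → β, ∀ p ∈ l, Set.EqOn c p.2 p.1
  | [], _ => ⟨fun _ => Classical.arbitrary β, by simp⟩
  | (s, f) :: l, h => by
    rw [List.map_cons, List.pairwise_cons, List.forall_mem_map] at h
    obtain ⟨c, hc⟩ := exists_eqOn_of_pairwise_disjoint_list l h.2
    refine ⟨s.piecewise f c, List.forall_mem_cons.2 ⟨fun a ha => piecewise_eq_of_mem _ _ _ ha,
      fun p hp a ha => ?_⟩⟩
    rw [piecewise_eq_of_notMem _ _ _ (disjoint_right.1 (h.1 p hp) ha)]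
    exact hc p hp ha

end Finset

def HasBVertex {VH β : Type*} (H : SimpleGraph VH) (c : VH → β) (x : β) : Prop :=
  ∃ a, c a = x ∧ ∀ y ≠ x, ∃ b, H.Adj a b ∧ c b = y

theorem isBColoring_comp_equiv {VH β : Type*} {H : SimpleGraph VH} {k : ℕ} (ε : β ≃ Fin k)
    {c : VH → β} (hproper : ∀ ⦃a b⦄, H.Adj a b → c a ≠ c b)
    (hb : ∀ x, HasBVertex H c x) :
    IsBColoring H k (ε ∘ c) := by
  have hb' : ∀ col, ∃ a, (ε ∘ c) a = col ∧ IsBVertex H (ε ∘ c) a := fun col => by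
    obtain ⟨a, ha, hcov⟩ := hb (ε.symm col)
    refine ⟨a, by simp [ha], fun col' hne => ?_⟩
    obtain ⟨b, hab, hbc⟩ := hcov (ε.symm col') (by simpa [ha] using ε.symm.injective.ne hne)
    exact ⟨b, hab, by simp [hbc]⟩
  exact ⟨fun a b hab => ε.injective.ne (hproper hab), fun col => (hb' col).imp fun _ => And.left,
    hb'⟩

/-- The `k` colours used on the graph `H` built from `(G, wt)`, for `A` the centres of the
anonymous stars and `E` the edges of `G`: `edgeQ e h` is the colour of `q_{e,h}` and `edgeX e` the
common colour of `x_{e,u}` and `x_{e,v}`. -/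
inductive GadgetColor (A E V : Type*)
  | star
  | anon (s : A)
  | vert (v : V)
  | edgeQ (e : E) (i : Fin 2)
  | edgeX (e : E)
  deriving DecidableEq

namespace GadgetColor

variable {A E V : Type*}

instance : Inhabited (GadgetColor A E V) := ⟨star⟩

def equivSum : GadgetColor A E V ≃ Unit ⊕ A ⊕ V ⊕ (E × Fin 2) ⊕ E where
  toFun
    | star => .inl ()
    | anon s => .inr (.inl s)
    | vert v => .inr (.inr (.inl v))
    | edgeQ e i => .inr (.inr (.inr (.inl (e, i))))
    | edgeX e => .inr (.inr (.inr (.inr e)))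
  invFun
    | .inl () => star
    | .inr (.inl s) => anon s
    | .inr (.inr (.inl v)) => vert v
    | .inr (.inr (.inr (.inl (e, i)))) => edgeQ e i
    | .inr (.inr (.inr (.inr e))) => edgeX e
  left_inv := by rintro (_ | _ | _ | _ | _) <;> rfl
  right_inv := by rintro (_ | _ | _ | ⟨_, _⟩ | _) <;> rfl

instance [Fintype A] [Fintype E] [Fintype V] : Fintype (GadgetColor A E V) :=
  Fintype.ofEquiv _ equivSum.symm

theorem _root_.Fintype.card_gadgetColor [Fintype A] [Fintype E] [Fintype V] :
    Fintype.card (GadgetColor A E V) =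
      Fintype.card A + 3 * Fintype.card E + Fintype.card V + 1 := by
  rw [Fintype.card_congr equivSum]
  simp only [Fintype.card_sum, Fintype.card_prod, Fintype.card_unit, Fintype.card_fin]
  ring

end GadgetColor

variable {G : SimpleGraph V} [DecidableRel G.Adj] {wt : Sym2 V → ℕ}

theorem IsCirculating.two_mul_outWeight {o : Sym2 V → V} (h : IsCirculating G wt o) (v : V) :
    2 * ∑ e ∈ G.edgeFinset.filter (fun e => v ∈ e ∧ o e ≠ v), wt e = vertW G wt v := by
  have := sum_filter_add_sum_filter_not (G.edgeFinset.filter (v ∈ ·)) (fun e => o e = v) wt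
  rw [filter_filter, filter_filter, h.2 v] at this
  rw [vertW, ← this, two_mul]

attribute [local instance] GadgetData.fintypeVH GadgetData.decEqVH

namespace Gadget

variable (g : Gadget V G wt)

abbrev Color : Type _ := GadgetColor g.Acenters G.edgeFinset V

theorem card_color : Fintype.card g.Color = numColors G wt := by
  rw [Fintype.card_gadgetColor, Fintype.card_coe, Fintype.card_coe, g.card_Acenters, numColors]
  ring

theorem x_mem_Xset {e : Sym2 V} (he : e ∈ G.edgeFinset) {v : V} (hv : v ∈ e) :
    g.x e v ∈ g.Xset := by
  simp only [GadgetData.Xset, mem_biUnion, mem_image, mem_filter, mem_univ, true_and]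
  exact ⟨e, he, v, hv, rfl⟩

theorem q_mem_Qset {e : Sym2 V} (he : e ∈ G.edgeFinset) (i : Fin 2) : g.q e i ∈ g.Qset := by
  simp only [GadgetData.Qset, mem_biUnion, mem_insert, mem_singleton]
  exact ⟨e, he, by fin_cases i <;> simp⟩

theorem x_injective : Injective fun p : {p : Sym2 V × V // p.1 ∈ G.edgeFinset ∧ p.2 ∈ p.1} =>
    g.x p.1.1 p.1.2 :=
  fun p p' h => Subtype.ext (g.x_inj _ p.2.1 _ p.2.2 _ p'.2.1 _ p'.2.2 h)

theorem q_injective : Injective fun p : G.edgeFinset × Fin 2 => g.q p.1 p.2 := fun p p' h => by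
  obtain ⟨he, hi⟩ := Prod.mk.inj (g.q_inj _ p.1.2 _ _ p'.1.2 _ h)
  exact Prod.ext (Subtype.ext he) hi

variable {g} {a b : g.VH} {e e' : Sym2 V} {v v' : V}

theorem adj_of_adjSpec (h : g.AdjSpec a b) : g.H.Adj a b := (g.adj_iff a b).2 (.inl h)

theorem adj_sstar (hb : b ∈ g.Sleaves) : g.H.Adj g.sstar b :=
  adj_of_adjSpec (.inl ⟨rfl, hb⟩)

theorem adj_center (ha : a ∈ g.Acenters) (hb : b ∈ g.Aleaves a) : g.H.Adj a b :=
  adj_of_adjSpec (.inr <| .inl ⟨a, ha, rfl, hb⟩)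

theorem adj_orig_P (hb : b ∈ g.P v) : g.H.Adj (g.orig v) b :=
  adj_of_adjSpec (.inr <| .inr <| .inl ⟨v, rfl, hb⟩)

theorem adj_orig_L (he : e ∈ G.edgeFinset) (hv : v ∈ e) (hb : b ∈ g.L e v) :
    g.H.Adj (g.orig v) b :=
  adj_of_adjSpec (.inr <| .inr <| .inr <| .inl ⟨e, he, v, hv, rfl, .inl hb⟩)

theorem adj_orig_Y (he : e ∈ G.edgeFinset) (hv : v ∈ e) (hb : b ∈ g.Y e) :
    g.H.Adj (g.orig v) b :=
  adj_of_adjSpec (.inr <| .inr <| .inr <| .inl ⟨e, he, v, hv, rfl, .inr hb⟩)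

theorem adj_x (he : e ∈ G.edgeFinset) (hv : v ∈ e)
    (hb : b ∈ g.Y e ∨ b ∈ g.Z e ∨ b ∈ g.L e v) : g.H.Adj (g.x e v) b :=
  adj_of_adjSpec (.inr <| .inr <| .inr <| .inr <| .inl ⟨e, he, v, hv, rfl, hb⟩)

theorem adj_q (he : e ∈ G.edgeFinset) (i : Fin 2)
    (hb : b ∈ g.Z e ∨ (∃ v ∈ e, b ∈ g.L e v) ∨ (∃ v ∈ e, b = g.x e v)) :
    g.H.Adj (g.q e i) b :=
  adj_of_adjSpec (.inr <| .inr <| .inr <| .inr <| .inr <| .inr ⟨e, he, i, rfl, hb⟩)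

theorem adj_q_q (he : e ∈ G.edgeFinset) {i j : Fin 2} (hij : i ≠ j) :
    g.H.Adj (g.q e i) (g.q e j) := by
  have h : g.H.Adj (g.q e 0) (g.q e 1) :=
    adj_of_adjSpec (.inr <| .inr <| .inr <| .inr <| .inr <| .inl ⟨e, he, rfl, rfl⟩)
  fin_cases i <;> fin_cases j
  exacts [absurd rfl hij, h, h.symm, absurd rfl hij]

variable (g)

def lColors (c : g.VH → g.Color) (e : Sym2 V) (v : V) : Finset g.Color := (g.L e v).image c

def edgeLColors (c : g.VH → g.Color) (e : Sym2 V) : Finset g.Color :=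
  e.toFinset.biUnion (g.lColors c e)

/-- The colours that the vertex `v` sees on its `L`- and `Y`-neighbours. -/
def lyColors (o : Sym2 V → V) (c : g.VH → g.Color) (v : V) : Finset g.Color :=
  ((G.edgeFinset.filter (v ∈ ·)).biUnion fun e => g.lColors c e v) ∪
    (G.edgeFinset.filter fun e => v ∈ e ∧ o e ≠ v).biUnion fun e => g.lColors c e (o e)

def pColors (o : Sym2 V → V) (c : g.VH → g.Color) (v : V) : Finset g.Color :=
  (insert (.vert v) (g.lyColors o c v))ᶜ

def zColors (c : g.VH → g.Color) (e : G.edgeFinset) : Finset g.Color :=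
  ({.edgeX e, .edgeQ e 0, .edgeQ e 1} ∪ g.edgeLColors c e)ᶜ

/-- Here `o e` is the head of the edge `e`. -/
structure IsGadgetColoring (o : Sym2 V → V) (c : g.VH → g.Color) : Prop where
  map_sstar : c g.sstar = .star
  bijOn_Sleaves : Set.BijOn c g.Sleaves ((univ : Finset g.Color).erase .star)
  mapsTo_L : ∀ e ∈ G.edgeFinset, ∀ v ∈ e, Set.MapsTo c (g.L e v) (Set.range .anon)
  map_center : ∀ s : g.Acenters, c s = .anon s
  bijOn_Aleaves : ∀ s : g.Acenters,
    Set.BijOn c (g.Aleaves s) ((univ : Finset g.Color).erase (.anon s))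
  map_orig : ∀ v, c (g.orig v) = .vert v
  bijOn_P : ∀ v, Set.BijOn c (g.P v) (g.pColors o c v)
  map_x : ∀ e : G.edgeFinset, ∀ v ∈ (e : Sym2 V), c (g.x e v) = .edgeX e
  bijOn_Y : ∀ e : G.edgeFinset, Set.BijOn c (g.Y e) (g.lColors c e (o e))
  bijOn_Z : ∀ e : G.edgeFinset, Set.BijOn c (g.Z e) (g.zColors c e)
  map_q : ∀ (e : G.edgeFinset) (i : Fin 2), c (g.q e i) = .edgeQ e i

variable {g} {f f' : g.VH → g.Color} {o : Sym2 V → V}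

theorem mem_range_anon_of_mem_lColors (hf : Set.MapsTo f (g.L e v) (Set.range .anon))
    {x : g.Color} (hx : x ∈ g.lColors f e v) : x ∈ Set.range .anon := by
  obtain ⟨a, ha, rfl⟩ := mem_image.1 hx
  exact hf ha

namespace IsGadgetColoring

variable {c : g.VH → g.Color}

theorem ne_of_adjSpec (hc : g.IsGadgetColoring o c) (ho : ∀ e ∈ G.edgeFinset, o e ∈ e)
    {a b : g.VH} (h : g.AdjSpec a b) : c a ≠ c b := by
  have ne_anon : ∀ {y : g.Color}, y ∈ Set.range .anon → (∀ s, c a ≠ .anon s) → c a ≠ y := by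
    rintro _ ⟨s, rfl⟩ h
    exact h s
  have anon_L : ∀ e ∈ G.edgeFinset, ∀ v ∈ e, ∀ b ∈ g.L e v, c b ∈ Set.range .anon :=
    fun e he v hv b hb => hc.mapsTo_L e he v hv hb
  have anon_Y : ∀ e (he : e ∈ G.edgeFinset), ∀ b ∈ g.Y e, c b ∈ Set.range .anon :=
    fun e he b hb => mem_range_anon_of_mem_lColors (hc.mapsTo_L e he (o e) (ho e he))
      ((hc.bijOn_Y ⟨e, he⟩).mapsTo hb)
  have not_Z : ∀ e (he : e ∈ G.edgeFinset), ∀ b ∈ g.Z e,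
      c b ≠ .edgeX ⟨e, he⟩ ∧ ∀ i, c b ≠ .edgeQ ⟨e, he⟩ i := fun e he b hb => by
    have := (hc.bijOn_Z ⟨e, he⟩).mapsTo hb
    simp only [zColors, coe_compl, Set.mem_compl_iff, mem_coe, mem_union, mem_insert,
      mem_singleton, not_or] at this
    exact ⟨this.1.1, Fin.forall_fin_two.2 ⟨this.1.2.1, this.1.2.2⟩⟩
  rcases h with ⟨rfl, hb⟩ | ⟨_, hs, rfl, hb⟩ | ⟨v, rfl, hb⟩ |
      ⟨e, he, v, hv, rfl, hb | hb⟩ | ⟨e, he, v, hv, rfl, hb | hb | hb⟩ |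
      ⟨e, he, rfl, rfl⟩ |
      ⟨e, he, i, rfl, hb | ⟨v, hv, hb⟩ | ⟨v, hv, rfl⟩⟩
  · rw [hc.map_sstar]
    exact (mem_erase.1 (hc.bijOn_Sleaves.mapsTo hb)).1.symm
  · rw [hc.map_center ⟨_, hs⟩]
    exact (mem_erase.1 ((hc.bijOn_Aleaves ⟨_, hs⟩).mapsTo hb)).1.symm
  · rw [hc.map_orig]
    exact fun h => mem_compl.1 ((hc.bijOn_P v).mapsTo hb) (mem_insert.2 (.inl h.symm))
  · exact ne_anon (anon_L e he v hv b hb) (by simp [hc.map_orig])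
  · exact ne_anon (anon_Y e he b hb) (by simp [hc.map_orig])
  · exact ne_anon (anon_Y e he b hb) (by simp [hc.map_x ⟨e, he⟩ v hv])
  · rw [hc.map_x ⟨e, he⟩ v hv]
    exact (not_Z e he b hb).1.symm
  · exact ne_anon (anon_L e he v hv b hb) (by simp [hc.map_x ⟨e, he⟩ v hv])
  · simp [hc.map_q ⟨e, he⟩]
  · rw [hc.map_q ⟨e, he⟩]
    exact ((not_Z e he b hb).2 i).symm
  · exact ne_anon (anon_L e he v hv b hb) (by simp [hc.map_q ⟨e, he⟩])
  · simp [hc.map_q ⟨e, he⟩, hc.map_x ⟨e, he⟩ v hv]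

theorem ne_of_adj (hc : g.IsGadgetColoring o c) (ho : ∀ e ∈ G.edgeFinset, o e ∈ e)
    ⦃a b : g.VH⦄ (h : g.H.Adj a b) : c a ≠ c b :=
  ((g.adj_iff a b).1 h).elim (hc.ne_of_adjSpec ho) fun h => (hc.ne_of_adjSpec ho h).symm

theorem hasBVertex_star (hc : g.IsGadgetColoring o c) : HasBVertex g.H c .star := by
  refine ⟨g.sstar, hc.map_sstar, fun y hy => ?_⟩
  obtain ⟨b, hb, rfl⟩ := hc.bijOn_Sleaves.surjOn (mem_erase.2 ⟨hy, mem_univ y⟩)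
  exact ⟨b, adj_sstar hb, rfl⟩

theorem hasBVertex_anon (hc : g.IsGadgetColoring o c) (s : g.Acenters) :
    HasBVertex g.H c (.anon s) := by
  refine ⟨s, hc.map_center s, fun y hy => ?_⟩
  obtain ⟨b, hb, rfl⟩ := (hc.bijOn_Aleaves s).surjOn (mem_erase.2 ⟨hy, mem_univ y⟩)
  exact ⟨b, adj_center s.2 hb, rfl⟩

theorem hasBVertex_vert (hc : g.IsGadgetColoring o c) (v : V) : HasBVertex g.H c (.vert v) := by
  refine ⟨g.orig v, hc.map_orig v, fun y hy => ?_⟩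
  by_cases hp : y ∈ g.pColors o c v
  · obtain ⟨b, hb, rfl⟩ := (hc.bijOn_P v).surjOn hp
    exact ⟨b, adj_orig_P hb, rfl⟩
  simp only [pColors, lyColors, mem_compl, not_not, mem_insert, hy, false_or, mem_union,
    mem_biUnion, mem_filter] at hp
  rcases hp with ⟨e, ⟨he, hv⟩, hy⟩ | ⟨e, ⟨he, hv, -⟩, hy⟩
  · obtain ⟨b, hb, rfl⟩ := mem_image.1 hy
    exact ⟨b, adj_orig_L he hv hb, rfl⟩
  · obtain ⟨b, hb, rfl⟩ := (hc.bijOn_Y ⟨e, he⟩).surjOn hy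
    exact ⟨b, adj_orig_Y he hv hb, rfl⟩

theorem hasBVertex_edgeQ (hc : g.IsGadgetColoring o c) (e : G.edgeFinset) (i : Fin 2) :
    HasBVertex g.H c (.edgeQ e i) := by
  refine ⟨g.q e i, hc.map_q e i, fun y hy => ?_⟩
  by_cases hz : y ∈ g.zColors c e
  · obtain ⟨b, hb, rfl⟩ := (hc.bijOn_Z e).surjOn hz
    exact ⟨b, adj_q e.2 i (.inl hb), rfl⟩
  simp only [zColors, edgeLColors, mem_compl, not_not, mem_union, mem_insert, mem_singleton,
    mem_biUnion, Sym2.mem_toFinset] at hz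
  rcases hz with (rfl | rfl | rfl) | ⟨v, hv, hy⟩
  · have hu := Sym2.out_fst_mem (e : Sym2 V)
    exact ⟨_, adj_q e.2 i (.inr (.inr ⟨_, hu, rfl⟩)), hc.map_x e _ hu⟩
  · exact ⟨_, adj_q_q e.2 fun h => hy (h ▸ rfl), hc.map_q e 0⟩
  · exact ⟨_, adj_q_q e.2 fun h => hy (h ▸ rfl), hc.map_q e 1⟩
  · obtain ⟨b, hb, rfl⟩ := mem_image.1 hy
    exact ⟨b, adj_q e.2 i (.inr (.inl ⟨v, hv, hb⟩)), rfl⟩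

theorem hasBVertex_edgeX (hc : g.IsGadgetColoring o c) (ho : ∀ e ∈ G.edgeFinset, o e ∈ e)
    (e : G.edgeFinset) : HasBVertex g.H c (.edgeX e) := by
  have hhead := ho e e.2
  have ht := Sym2.other_mem hhead
  have hends : ∀ v ∈ (e : Sym2 V), v = o e ∨ v = Sym2.Mem.other hhead := fun v hv => by
    rwa [← Sym2.other_spec hhead, Sym2.mem_iff] at hv
  refine ⟨g.x e _, hc.map_x e _ ht, fun y hy => ?_⟩
  by_cases hz : y ∈ g.zColors c e
  · obtain ⟨b, hb, rfl⟩ := (hc.bijOn_Z e).surjOn hz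
    exact ⟨b, adj_x e.2 ht (.inr (.inl hb)), rfl⟩
  simp only [zColors, edgeLColors, mem_compl, not_not, mem_union, mem_insert, mem_singleton,
    mem_biUnion, Sym2.mem_toFinset] at hz
  rcases hz with (rfl | rfl | rfl) | ⟨v, hv, hy⟩
  · exact absurd rfl hy
  · exact ⟨_, (adj_q e.2 0 (.inr (.inr ⟨_, ht, rfl⟩))).symm, hc.map_q e 0⟩
  · exact ⟨_, (adj_q e.2 1 (.inr (.inr ⟨_, ht, rfl⟩))).symm, hc.map_q e 1⟩
  · rcases hends v hv with rfl | rfl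
    · obtain ⟨b, hb, rfl⟩ := (hc.bijOn_Y e).surjOn hy
      exact ⟨b, adj_x e.2 ht (.inl hb), rfl⟩
    · obtain ⟨b, hb, rfl⟩ := mem_image.1 hy
      exact ⟨b, adj_x e.2 ht (.inr (.inr hb)), rfl⟩

theorem hasBVertex (hc : g.IsGadgetColoring o c) (ho : ∀ e ∈ G.edgeFinset, o e ∈ e) :
    ∀ x, HasBVertex g.H c x
  | .star => hc.hasBVertex_star
  | .anon s => hc.hasBVertex_anon s
  | .vert v => hc.hasBVertex_vert v
  | .edgeQ e i => hc.hasBVertex_edgeQ e i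
  | .edgeX e => hc.hasBVertex_edgeX ho e

end IsGadgetColoring

theorem card_lColors (hf : Set.InjOn f g.Sleaves) (he : e ∈ G.edgeFinset) (hv : v ∈ e) :
    #(g.lColors f e v) = wt e :=
  (card_image_of_injOn (hf.mono (coe_subset.2 (g.L_subset e he v hv)))).trans
    (g.card_L e he v hv)

theorem disjoint_lColors (hf : Set.InjOn f g.Sleaves) (he : e ∈ G.edgeFinset) (hv : v ∈ e)
    (he' : e' ∈ G.edgeFinset) (hv' : v' ∈ e') (hne : (e, v) ≠ (e', v')) :
    Disjoint (g.lColors f e v) (g.lColors f e' v') := by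
  refine disjoint_left.2 fun x hx hx' => ?_
  obtain ⟨a, ha, rfl⟩ := mem_image.1 hx
  obtain ⟨b, hb, hba⟩ := mem_image.1 hx'
  obtain rfl := hf (g.L_subset e' he' v' hv' hb) (g.L_subset e he v hv ha) hba
  exact disjoint_left.1 (g.L_disjoint e he v hv e' he' v' hv' hne) ha hb

theorem card_edgeLColors (hf : Set.InjOn f g.Sleaves) (he : e ∈ G.edgeFinset) :
    #(g.edgeLColors f e) = 2 * wt e := by
  have hends : ∀ v ∈ e.toFinset, v ∈ e := fun v hv => Sym2.mem_toFinset.1 hv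
  rw [edgeLColors, card_biUnion fun v hv v' hv' hne => disjoint_lColors hf he (hends v hv) he
      (hends v' hv') (by simpa using hne),
    sum_congr rfl fun v hv => card_lColors hf he (hends v hv), sum_const,
    Sym2.card_toFinset_of_not_isDiag _ (G.not_isDiag_of_mem_edgeFinset he), smul_eq_mul]

theorem card_zColors (hf : Set.InjOn f g.Sleaves)
    (hanon : ∀ e ∈ G.edgeFinset, ∀ v ∈ e, Set.MapsTo f (g.L e v) (Set.range .anon))
    (e : G.edgeFinset) : #(g.zColors f e) = #(g.Z e) := by
  have hdisj : Disjoint ({.edgeX e, .edgeQ e 0, .edgeQ e 1} : Finset g.Color)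
      (g.edgeLColors f e) := by
    refine disjoint_left.2 fun x hx hx' => ?_
    obtain ⟨v, hv, hx'⟩ := mem_biUnion.1 hx'
    obtain ⟨s, rfl⟩ := mem_range_anon_of_mem_lColors
      (hanon e e.2 v (Sym2.mem_toFinset.1 hv)) hx'
    simp at hx
  have hk := card_compl_add_card ({.edgeX e, .edgeQ e 0, .edgeQ e 1} ∪ g.edgeLColors f e)
  rw [card_union_of_disjoint hdisj, card_edgeLColors hf e.2, card_color] at hk
  have h3 : #({.edgeX e, .edgeQ e 0, .edgeQ e 1} : Finset g.Color) = 3 := by simp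
  have hZ := g.card_Z e e.2
  rw [zColors]
  omega

theorem card_lyColors (hf : Set.InjOn f g.Sleaves) (ho : ∀ e ∈ G.edgeFinset, o e ∈ e)
    (v : V) : #(g.lyColors o f v) =
      vertW G wt v + ∑ e ∈ G.edgeFinset.filter (fun e => v ∈ e ∧ o e ≠ v), wt e := by
  rw [lyColors, card_union_of_disjoint, card_biUnion, card_biUnion, vertW]
  · congr 1 <;> refine sum_congr rfl fun e he => ?_ <;> rw [mem_filter] at he
    exacts [card_lColors hf he.1 he.2, card_lColors hf he.1 (ho e he.1)]
  · intro e he e' he' hne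
    simp only [mem_coe, mem_filter] at he he'
    exact disjoint_lColors hf he.1 (ho e he.1) he'.1 (ho e' he'.1) (by simp [hne])
  · intro e he e' he' hne
    simp only [mem_coe, mem_filter] at he he'
    exact disjoint_lColors hf he.1 he.2 he'.1 he'.2 (by simp [hne])
  · simp only [disjoint_biUnion_left, disjoint_biUnion_right, mem_filter]
    exact fun e he e' he' => disjoint_lColors hf he'.1 he'.2 he.1 (ho e he.1)
      (by simp [he.2.2.symm])

theorem card_pColors (hf : Set.InjOn f g.Sleaves)
    (hanon : ∀ e ∈ G.edgeFinset, ∀ v ∈ e, Set.MapsTo f (g.L e v) (Set.range .anon))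
    (hcirc : IsCirculating G wt o) (v : V) : #(g.pColors o f v) = #(g.P v) := by
  have hvert : .vert v ∉ g.lyColors o f v := fun h => by
    simp only [lyColors, mem_union, mem_biUnion, mem_filter] at h
    obtain ⟨e, ⟨he, hu⟩, h⟩ | ⟨e, ⟨he, -⟩, h⟩ := h
    · simpa using mem_range_anon_of_mem_lColors (hanon e he v hu) h
    · simpa using mem_range_anon_of_mem_lColors (hanon e he (o e) (hcirc.1 e he)) h
  have hk := card_compl_add_card (insert (.vert v) (g.lyColors o f v))
  rw [card_insert_of_notMem hvert, card_lyColors hf hcirc.1, card_color] at hk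
  have hout := hcirc.two_mul_outWeight v
  have hP := g.card_P v
  rw [pColors]
  omega

theorem lColors_congr (h : Set.EqOn f f' g.Sleaves) (he : e ∈ G.edgeFinset) (hv : v ∈ e) :
    g.lColors f e v = g.lColors f' e v :=
  image_congr (h.mono (coe_subset.2 (g.L_subset e he v hv)))

theorem pColors_congr (h : Set.EqOn f f' g.Sleaves) (ho : ∀ e ∈ G.edgeFinset, o e ∈ e)
    (v : V) : g.pColors o f v = g.pColors o f' v := by
  simp only [pColors, lyColors]
  congr 3 <;> refine biUnion_congr rfl fun e he => ?_ <;> simp only [mem_filter] at he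
  exacts [lColors_congr h he.1 he.2, lColors_congr h he.1 (ho e he.1)]

theorem zColors_congr (h : Set.EqOn f f' g.Sleaves) (e : G.edgeFinset) :
    g.zColors f e = g.zColors f' e := by
  simp only [zColors, edgeLColors]
  congr 2
  exact biUnion_congr rfl fun v hv => lColors_congr h e.2 (Sym2.mem_toFinset.1 hv)

variable (g)

def lLeaves : Finset g.VH := G.edgeFinset.biUnion fun e => e.toFinset.biUnion (g.L e)

theorem lLeaves_subset : g.lLeaves ⊆ g.Sleaves := by
  simp only [lLeaves, biUnion_subset, Sym2.mem_toFinset]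
  exact fun e he v hv => g.L_subset e he v hv

theorem card_lLeaves_le : #g.lLeaves ≤ 2 * totW G wt := by
  calc #g.lLeaves ≤ ∑ e ∈ G.edgeFinset, #(e.toFinset.biUnion (g.L e)) := card_biUnion_le
    _ ≤ ∑ e ∈ G.edgeFinset, 2 * wt e := sum_le_sum fun e he => by
      refine card_biUnion_le.trans (le_of_eq ?_)
      rw [sum_congr rfl fun v hv => g.card_L e he v (Sym2.mem_toFinset.1 hv), sum_const,
        Sym2.card_toFinset_of_not_isDiag _ (G.not_isDiag_of_mem_edgeFinset he), smul_eq_mul]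
    _ = 2 * totW G wt := by rw [totW, mul_sum]

theorem exists_bijOn_Sleaves : ∃ f : g.VH → g.Color,
    Set.BijOn f g.Sleaves ((univ : Finset g.Color).erase .star) ∧
      ∀ e ∈ G.edgeFinset, ∀ v ∈ e, Set.MapsTo f (g.L e v) (Set.range .anon) := by
  obtain ⟨f, hbij, hmaps⟩ := exists_bijOn_mapsTo g.lLeaves_subset
    (t' := (univ : Finset g.Acenters).map ⟨.anon, fun _ _ => GadgetColor.anon.inj⟩)
    (t := (univ : Finset g.Color).erase .star)
    (fun _ hx => by obtain ⟨s, -, rfl⟩ := mem_map.1 hx; simp)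
    (by rw [card_erase_of_mem (mem_univ _), card_univ, card_color, g.card_Sleaves])
    (by rw [card_map, card_univ, Fintype.card_coe, g.card_Acenters]
        exact g.card_lLeaves_le.trans (Nat.le_succ _))
  refine ⟨f, hbij, fun e he v hv a ha => ?_⟩
  have ha' : a ∈ g.lLeaves :=
    mem_biUnion.2 ⟨e, he, mem_biUnion.2 ⟨v, Sym2.mem_toFinset.2 hv, ha⟩⟩
  obtain ⟨s, -, hs⟩ := mem_map.1 (hmaps ha')
  exact ⟨s, hs⟩

theorem exists_eqOn_parts (fS fA fP fY fZ : g.VH → g.Color) : ∃ c : g.VH → g.Color,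
    c g.sstar = .star ∧ Set.EqOn c fS g.Sleaves ∧ (∀ s : g.Acenters, c s = .anon s) ∧
    Set.EqOn c fA (g.Acenters.biUnion g.Aleaves) ∧ (∀ v, c (g.orig v) = .vert v) ∧
    Set.EqOn c fP (univ.biUnion g.P) ∧
    (∀ e : G.edgeFinset, ∀ v ∈ (e : Sym2 V), c (g.x e v) = .edgeX e) ∧
    Set.EqOn c fY (G.edgeFinset.biUnion g.Y) ∧ Set.EqOn c fZ (G.edgeFinset.biUnion g.Z) ∧
    ∀ (e : G.edgeFinset) (i : Fin 2), c (g.q e i) = .edgeQ e i := by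
  obtain ⟨c, hc⟩ := exists_eqOn_of_pairwise_disjoint_list
    [({g.sstar}, fun _ => .star), (g.Sleaves, fS),
      (g.Acenters, extend Subtype.val GadgetColor.anon default),
      (g.Acenters.biUnion g.Aleaves, fA),
      (univ.image g.orig, extend g.orig GadgetColor.vert default), (univ.biUnion g.P, fP),
      (g.Xset, extend (fun p : {p : Sym2 V × V // p.1 ∈ G.edgeFinset ∧ p.2 ∈ p.1} =>
        g.x p.1.1 p.1.2) (fun p => GadgetColor.edgeX ⟨p.1.1, p.2.1⟩) default),
      (G.edgeFinset.biUnion g.Y, fY), (G.edgeFinset.biUnion g.Z, fZ),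
      (g.Qset, extend (fun p : G.edgeFinset × Fin 2 => g.q p.1 p.2)
        (fun p => GadgetColor.edgeQ p.1 p.2) default)]
    g.parts_disjoint
  simp only [List.forall_mem_cons, List.not_mem_nil, IsEmpty.forall_iff, implies_true,
    and_true] at hc
  obtain ⟨h₀, h₁, h₂, h₃, h₄, h₅, h₆, h₇, h₈, h₉⟩ := hc
  exact ⟨c, h₀ (mem_singleton_self _), h₁,
    fun s => (h₂ s.2).trans (Subtype.val_injective.extend_apply _ _ s), h₃,
    fun v => (h₄ (mem_image_of_mem _ (mem_univ v))).trans (g.orig_inj.extend_apply _ _ v), h₅,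
    fun e v hv => (h₆ (g.x_mem_Xset e.2 hv)).trans
      (g.x_injective.extend_apply _ _ ⟨(e, v), e.2, hv⟩), h₇, h₈,
    fun e i => (h₉ (g.q_mem_Qset e.2 i)).trans (g.q_injective.extend_apply _ _ (e, i))⟩

variable {g}

theorem exists_isGadgetColoring (hcirc : IsCirculating G wt o) :
    ∃ c : g.VH → g.Color, g.IsGadgetColoring o c := by
  obtain ⟨fS, hS, hanon⟩ := g.exists_bijOn_Sleaves
  obtain ⟨fA, hA⟩ := exists_bijOn_of_pairwise_disjoint (s := fun s : g.Acenters => g.Aleaves s)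
    (t := fun s => (univ : Finset g.Color).erase (.anon s))
    (fun s s' h => g.Aleaves_disjoint s s.2 s' s'.2 (Subtype.coe_injective.ne h))
    fun s => by rw [g.card_Aleaves s s.2, card_erase_of_mem (mem_univ _), card_univ, card_color]
  obtain ⟨fP, hP⟩ := exists_bijOn_of_pairwise_disjoint (t := g.pColors o fS) g.P_disjoint
    fun v => (card_pColors hS.injOn hanon hcirc v).symm
  obtain ⟨fY, hY⟩ := exists_bijOn_of_pairwise_disjoint (s := fun e : G.edgeFinset => g.Y e)
    (t := fun e => g.lColors fS e (o e))
    (fun e e' h => g.Y_disjoint e e.2 e' e'.2 (Subtype.coe_injective.ne h))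
    fun e => by rw [g.card_Y e e.2, card_lColors hS.injOn e.2 (hcirc.1 e e.2)]
  obtain ⟨fZ, hZ⟩ := exists_bijOn_of_pairwise_disjoint (s := fun e : G.edgeFinset => g.Z e)
    (t := g.zColors fS) (fun e e' h => g.Z_disjoint e e.2 e' e'.2 (Subtype.coe_injective.ne h))
    fun e => (card_zColors hS.injOn hanon e).symm
  obtain ⟨c, h₀, h₁, h₂, h₃, h₄, h₅, h₆, h₇, h₈, h₉⟩ := g.exists_eqOn_parts fS fA fP fY fZ
  have hSc : Set.EqOn fS c g.Sleaves := h₁.symm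
  refine ⟨c, ⟨h₀, hS.congr hSc,
    fun e he v hv => (hanon e he v hv).congr (hSc.mono (coe_subset.2 (g.L_subset e he v hv))),
    h₂, fun s => (hA s).congr (h₃.symm.mono (coe_subset.2 (subset_biUnion_of_mem _ s.2))),
    h₄, fun v => ?_, h₆, fun e => ?_, fun e => ?_, h₉⟩⟩
  · rw [← pColors_congr hSc hcirc.1]
    exact (hP v).congr (h₅.symm.mono (coe_subset.2 (subset_biUnion_of_mem _ (mem_univ v))))
  · rw [← lColors_congr hSc e.2 (hcirc.1 e e.2)]
    exact (hY e).congr (h₇.symm.mono (coe_subset.2 (subset_biUnion_of_mem g.Y e.2)))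
  · rw [← zColors_congr hSc]
    exact (hZ e).congr (h₈.symm.mono (coe_subset.2 (subset_biUnion_of_mem g.Z e.2)))

end Gadget

theorem circulating_orientation_gives_bColoring_general
    {V : Type*} [Fintype V] [DecidableEq V] (G : SimpleGraph V) [DecidableRel G.Adj]
    (wt : Sym2 V → ℕ)
    (g : Gadget V G wt)
    (horient : ∃ o : Sym2 V → V, IsCirculating G wt o) :
    ∃ c : g.VH → Fin (numColors G wt), IsBColoring g.H (numColors G wt) c := by
  obtain ⟨o, hcirc⟩ := horient
  obtain ⟨c, hc⟩ := g.exists_isGadgetColoring hcirc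
  exact ⟨_, isBColoring_comp_equiv (Fintype.equivFinOfCardEq g.card_color) (hc.ne_of_adj hcirc.1)
    (hc.hasBVertex hcirc.1)⟩

/-- If `(G, wt)` admits a circulating orientation, then the constructed
graph `H` admits a b-coloring with `k = 2W + 3m + n + 2` colors. -/
theorem circulating_orientation_gives_bColoring
    {V : Type*} [Fintype V] [DecidableEq V] (G : SimpleGraph V) [DecidableRel G.Adj]
    (wt : Sym2 V → ℕ) (hconn : G.Connected)
    (hwt : ∀ e ∈ G.edgeFinset, 1 ≤ wt e)
    (heven : ∀ v : V, Even (vertW G wt v))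
    (g : Gadget V G wt)
    (horient : ∃ o : Sym2 V → V, IsCirculating G wt o) :
    ∃ c : g.VH → Fin (numColors G wt), IsBColoring g.H (numColors G wt) c :=
  circulating_orientation_gives_bColoring_general G wt g horient
end

section
/- In any b-coloring of the constructed graph H with k colors, for every edge e = uv of G it is not the case that x_{e,u} and x_{e,v} are both b-vertices with two distinct colors; that is, if both x_{e,u} and x_{e,v} are b-vertices for their colors, then they receive the same color. -/
open Finset

variable {V : Type*} [Fintype V] [DecidableEq V]

/-!
Suppose `x_{e,u}` and `x_{e,v}` are both b-vertices. The neighbourhood of `x_{e,u}` is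
`Y_e ∪ Z_e ∪ L_{e,u} ∪ {q_{e,1}, q_{e,2}}`, of size exactly `k - 1`, so it shows every colour but
`c(x_{e,u})` exactly once; likewise for `x_{e,v}`. Whether or not `x_{e,u}` and `x_{e,v}` share
their colour, this produces two disjoint pairs of equally coloured vertices among the `k`
neighbours of `q_{e,h}`, which therefore sees at most `k - 2` colours: neither `q_{e,h}` is a
b-vertex.

Every vertex outside `{s*} ∪ V(G) ∪ A ∪ X ∪ Q` has degree at most `5 < k - 1`, so all b-vertices
lie in that set. It has `1 + n + (2W + 1)` vertices outside `X ∪ Q`, and for each edge at most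
three of `x_{e',·}, q_{e',·}` are b-vertices, only two for the edge `e`. This leaves room for at
most `2W + 3m + n + 1 < k` b-vertices, whereas a b-coloring has one in every colour class. So
`x_{e,u}` and `x_{e,v}` are never both b-vertices.
-/

namespace Finset

variable {α ι : Type*} [DecidableEq α]

theorem card_le_card_add_sum_card_inter {D R : Finset α} {s : Finset ι} {t : ι → Finset α}
    (h : D ⊆ R ∪ s.biUnion t) : #D ≤ #R + ∑ i ∈ s, #(D ∩ t i) := by
  have hD : D ⊆ R ∪ s.biUnion fun i => D ∩ t i := fun a ha => by
    rcases mem_union.mp (h ha) with hR | hT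
    · exact mem_union_left _ hR
    · obtain ⟨i, hi, hat⟩ := mem_biUnion.mp hT
      exact mem_union_right _ (mem_biUnion.mpr ⟨i, hi, mem_inter.mpr ⟨ha, hat⟩⟩)
  calc #D ≤ #(R ∪ s.biUnion fun i => D ∩ t i) := card_le_card hD
    _ ≤ #R + #(s.biUnion fun i => D ∩ t i) := card_union_le _ _
    _ ≤ #R + ∑ i ∈ s, #(D ∩ t i) := Nat.add_le_add_left card_biUnion_le _

theorem card_inter_le_three {D : Finset α} {a b c d : α} (h : a ∈ D → b ∈ D → c ∉ D) :
    #(D ∩ {a, b, c, d}) ≤ 3 := by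
  by_cases ha : a ∈ D
  · by_cases hb : b ∈ D
    · refine (card_le_card fun x hx => ?_).trans (card_le_three (a := a) (b := b) (c := d))
      simp only [mem_inter, mem_insert, mem_singleton] at hx ⊢
      grind
    · refine (card_le_card fun x hx => ?_).trans (card_le_three (a := a) (b := c) (c := d))
      simp only [mem_inter, mem_insert, mem_singleton] at hx ⊢
      grind
  · refine (card_le_card fun x hx => ?_).trans (card_le_three (a := b) (b := c) (c := d))
    simp only [mem_inter, mem_insert, mem_singleton] at hx ⊢
    grind

theorem card_inter_le_two {D : Finset α} {a b c d : α} (hc : c ∉ D) (hd : d ∉ D) :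
    #(D ∩ {a, b, c, d}) ≤ 2 := by
  refine (card_le_card fun x hx => ?_).trans (card_le_two (a := a) (b := b))
  simp only [mem_inter, mem_insert, mem_singleton] at hx ⊢
  grind

theorem sum_add_one_le_mul_card {s : Finset ι} {f : ι → ℕ} {n : ℕ} {i₀ : ι}
    (hi₀ : i₀ ∈ s) (hf : ∀ i ∈ s, f i ≤ n) (hf₀ : f i₀ < n) : ∑ i ∈ s, f i + 1 ≤ n * #s := by
  classical
  rw [← add_sum_erase s f hi₀, ← card_erase_add_one hi₀]
  have := sum_le_card_nsmul (s.erase i₀) f n fun i hi => hf i (mem_of_mem_erase hi)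
  rw [smul_eq_mul] at this
  nlinarith

end Finset

section BColoring

variable {VH : Type*} {H : SimpleGraph VH} {k : ℕ} {c : VH → Fin k}

theorem IsBVertex.card_sub_one_le_card_image [DecidableEq VH] {a : VH} (ha : IsBVertex H c a)
    {S : Finset VH} (hS : ∀ b, H.Adj a b → b ∈ S) : k - 1 ≤ #(S.image c) :=
  calc k - 1 = #(univ.erase (c a)) := by simp
    _ ≤ #(S.image c) := card_le_card fun col hcol => by
        obtain ⟨b, hab, rfl⟩ := ha col (ne_of_mem_erase hcol)
        exact mem_image_of_mem c (hS b hab)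

theorem IsBVertex.card_sub_one_le_card [DecidableEq VH] {a : VH} (ha : IsBVertex H c a)
    {S : Finset VH} (hS : ∀ b, H.Adj a b → b ∈ S) : k - 1 ≤ #S :=
  (ha.card_sub_one_le_card_image hS).trans card_image_le

theorem IsBVertex.injOn_of_card_lt [DecidableEq VH] {a : VH} (ha : IsBVertex H c a)
    {S : Finset VH} (hS : ∀ b, H.Adj a b → b ∈ S) (hcard : #S < k) : Set.InjOn c S :=
  card_image_iff.mp <| le_antisymm card_image_le <| by
    have := ha.card_sub_one_le_card_image hS
    omega

theorem IsBVertex.add_one_le_card_of_two_repeats [DecidableEq VH] {a : VH}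
    (ha : IsBVertex H c a) {S : Finset VH} (hS : ∀ b, H.Adj a b → b ∈ S)
    {a₁ a₂ b₁ b₂ : VH} (ha₁ : a₁ ∈ S \ {b₁, b₂}) (ha₂ : a₂ ∈ S \ {b₁, b₂}) (hb₁ : b₁ ∈ S)
    (hb₂ : b₂ ∈ S) (hb : b₁ ≠ b₂) (hc₁ : c a₁ = c b₁) (hc₂ : c a₂ = c b₂) :
    k + 1 ≤ #S := by
  have himage : S.image c ⊆ (S \ {b₁, b₂}).image c := fun col hcol => by
    obtain ⟨b, hb, rfl⟩ := mem_image.mp hcol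
    by_cases h₁ : b = b₁
    · exact mem_image.mpr ⟨a₁, ha₁, h₁ ▸ hc₁⟩
    by_cases h₂ : b = b₂
    · exact mem_image.mpr ⟨a₂, ha₂, h₂ ▸ hc₂⟩
    exact mem_image_of_mem c (by simp [hb, h₁, h₂])
  have hsdiff : #(S \ {b₁, b₂}) = #S - 2 := by
    rw [card_sdiff_of_subset (by simp [insert_subset_iff, hb₁, hb₂]), card_pair hb]
  have hk := (ha.card_sub_one_le_card_image hS).trans ((card_le_card himage).trans card_image_le)
  have hpos : 0 < k := (c a).pos
  have hne : 0 < #(S \ {b₁, b₂}) := card_pos.mpr ⟨a₁, ha₁⟩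
  omega

theorem IsBColoring.le_card {D : Finset VH} (hc : IsBColoring H k c)
    (hD : ∀ a, IsBVertex H c a → a ∈ D) : k ≤ #D := by
  classical
  calc k = #(univ : Finset (Fin k)) := by simp
    _ ≤ #(D.image c) := card_le_card fun col _ => by
        obtain ⟨a, rfl, ha⟩ := hc.2.2 col
        exact mem_image_of_mem c (hD a ha)
    _ ≤ #D := card_image_le

end BColoring

instance GadgetData.instFintypeVH {G : SimpleGraph V} [DecidableRel G.Adj] {wt : Sym2 V → ℕ}
    (g : GadgetData V G wt) : Fintype g.VH := g.fintypeVH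

instance GadgetData.instDecidableEqVH {G : SimpleGraph V} [DecidableRel G.Adj]
    {wt : Sym2 V → ℕ} (g : GadgetData V G wt) : DecidableEq g.VH := g.decEqVH

namespace Gadget

variable {G : SimpleGraph V} [DecidableRel G.Adj] {wt : Sym2 V → ℕ} (g : Gadget V G wt)

theorem exists_mem_parts_getElem (a : g.VH) :
    ∃ i, ∃ h : i < g.parts.length, a ∈ g.parts[i] := by
  obtain ⟨p, hp, ha⟩ := g.parts_cover a
  obtain ⟨i, hi, rfl⟩ := List.getElem_of_mem hp
  exact ⟨i, hi, ha⟩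

/-- Tagged for `grind`, the values of `partIndex` computed below let it rule out any
coincidence between vertices lying in different parts of `H`. -/
noncomputable def partIndex (a : g.VH) : ℕ := (g.exists_mem_parts_getElem a).choose

theorem partIndex_eq {a : g.VH} {i : ℕ} (hi : i < g.parts.length) (ha : a ∈ g.parts[i]) :
    g.partIndex a = i := by
  obtain ⟨hk, hak⟩ := (g.exists_mem_parts_getElem a).choose_spec
  have hdisj := List.pairwise_iff_getElem.mp g.parts_disjoint
  by_contra hne
  rcases Nat.lt_or_gt_of_ne hne with h | h
  · exact disjoint_left.mp (hdisj _ _ hk hi h) hak ha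
  · exact disjoint_left.mp (hdisj _ _ hi hk h) ha hak

variable {g}

theorem partIndex_sstar : g.partIndex g.sstar = 0 :=
  g.partIndex_eq (i := 0) (by simp [GadgetData.parts]) (by simp [GadgetData.parts])

theorem partIndex_of_mem_Sleaves {a : g.VH} (ha : a ∈ g.Sleaves) : g.partIndex a = 1 :=
  g.partIndex_eq (i := 1) (by simp [GadgetData.parts]) (by simpa [GadgetData.parts])

theorem partIndex_of_mem_L {e : Sym2 V} {v : V} {a : g.VH} (he : e ∈ G.edgeFinset) (hv : v ∈ e)
    (ha : a ∈ g.L e v) : g.partIndex a = 1 :=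
  partIndex_of_mem_Sleaves (g.L_subset e he v hv ha)

theorem partIndex_of_mem_Acenters {a : g.VH} (ha : a ∈ g.Acenters) : g.partIndex a = 2 :=
  g.partIndex_eq (i := 2) (by simp [GadgetData.parts]) (by simpa [GadgetData.parts])

theorem partIndex_of_mem_Aleaves {s a : g.VH} (hs : s ∈ g.Acenters) (ha : a ∈ g.Aleaves s) :
    g.partIndex a = 3 :=
  g.partIndex_eq (i := 3) (by simp [GadgetData.parts])
    (by simpa [GadgetData.parts] using ⟨s, hs, ha⟩)

theorem partIndex_orig (v : V) : g.partIndex (g.orig v) = 4 :=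
  g.partIndex_eq (i := 4) (by simp [GadgetData.parts]) (by simp [GadgetData.parts])

theorem partIndex_of_mem_P {v : V} {a : g.VH} (ha : a ∈ g.P v) : g.partIndex a = 5 :=
  g.partIndex_eq (i := 5) (by simp [GadgetData.parts])
    (by simpa [GadgetData.parts] using ⟨v, ha⟩)

theorem partIndex_x {e : Sym2 V} {v : V} (he : e ∈ G.edgeFinset) (hv : v ∈ e) :
    g.partIndex (g.x e v) = 6 :=
  g.partIndex_eq (i := 6) (by simp [GadgetData.parts])
    (by simpa [GadgetData.parts, GadgetData.Xset] using
      ⟨e, SimpleGraph.mem_edgeFinset.mp he, v, hv, rfl⟩)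

theorem partIndex_of_mem_Y {e : Sym2 V} {a : g.VH} (he : e ∈ G.edgeFinset) (ha : a ∈ g.Y e) :
    g.partIndex a = 7 :=
  g.partIndex_eq (i := 7) (by simp [GadgetData.parts])
    (by simpa [GadgetData.parts] using ⟨e, SimpleGraph.mem_edgeFinset.mp he, ha⟩)

theorem partIndex_of_mem_Z {e : Sym2 V} {a : g.VH} (he : e ∈ G.edgeFinset) (ha : a ∈ g.Z e) :
    g.partIndex a = 8 :=
  g.partIndex_eq (i := 8) (by simp [GadgetData.parts])
    (by simpa [GadgetData.parts] using ⟨e, SimpleGraph.mem_edgeFinset.mp he, ha⟩)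

theorem partIndex_q {e : Sym2 V} (he : e ∈ G.edgeFinset) (i : Fin 2) :
    g.partIndex (g.q e i) = 9 :=
  g.partIndex_eq (i := 9) (by simp [GadgetData.parts])
    (by simpa [GadgetData.parts, GadgetData.Qset] using
      ⟨e, SimpleGraph.mem_edgeFinset.mp he, by fin_cases i <;> simp⟩)

attribute [grind =] partIndex_sstar partIndex_orig partIndex_x partIndex_q
attribute [grind →] partIndex_of_mem_Sleaves partIndex_of_mem_L partIndex_of_mem_Acenters
  partIndex_of_mem_Aleaves partIndex_of_mem_P partIndex_of_mem_Y partIndex_of_mem_Z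

theorem x_eq_x_iff {e e' : Sym2 V} {v v' : V} (he : e ∈ G.edgeFinset) (hv : v ∈ e)
    (he' : e' ∈ G.edgeFinset) (hv' : v' ∈ e') : g.x e v = g.x e' v' ↔ e = e' ∧ v = v' :=
  ⟨fun h => by simpa using g.x_inj e he v hv e' he' v' hv' h, fun ⟨he, hv⟩ => he ▸ hv ▸ rfl⟩

theorem q_eq_q_iff {e e' : Sym2 V} {i i' : Fin 2} (he : e ∈ G.edgeFinset)
    (he' : e' ∈ G.edgeFinset) : g.q e i = g.q e' i' ↔ e = e' ∧ i = i' :=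
  ⟨fun h => by simpa using g.q_inj e he i e' he' i' h, fun ⟨he, hi⟩ => he ▸ hi ▸ rfl⟩

theorem q_eq_q_zero_or_q_one (e : Sym2 V) (i : Fin 2) : g.q e i = g.q e 0 ∨ g.q e i = g.q e 1 := by
  fin_cases i <;> simp

theorem eq_of_mem_L_of_mem_L {e e' : Sym2 V} {v v' : V} {a : g.VH} (he : e ∈ G.edgeFinset)
    (hv : v ∈ e) (he' : e' ∈ G.edgeFinset) (hv' : v' ∈ e') (ha : a ∈ g.L e v)
    (ha' : a ∈ g.L e' v') : e = e' ∧ v = v' := by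
  by_contra hne
  exact disjoint_left.mp (g.L_disjoint e he v hv e' he' v' hv' (by simpa using hne)) ha ha'

theorem eq_of_mem_Aleaves_of_mem_Aleaves {s s' a : g.VH} (hs : s ∈ g.Acenters)
    (hs' : s' ∈ g.Acenters) (ha : a ∈ g.Aleaves s) (ha' : a ∈ g.Aleaves s') : s = s' := by
  by_contra hne
  exact disjoint_left.mp (g.Aleaves_disjoint s hs s' hs' hne) ha ha'

theorem eq_of_mem_P_of_mem_P {v v' : V} {a : g.VH} (ha : a ∈ g.P v) (ha' : a ∈ g.P v') :
    v = v' := by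
  by_contra hne
  exact disjoint_left.mp (g.P_disjoint v v' hne) ha ha'

theorem eq_of_mem_Y_of_mem_Y {e e' : Sym2 V} {a : g.VH} (he : e ∈ G.edgeFinset)
    (he' : e' ∈ G.edgeFinset) (ha : a ∈ g.Y e) (ha' : a ∈ g.Y e') : e = e' := by
  by_contra hne
  exact disjoint_left.mp (g.Y_disjoint e he e' he' hne) ha ha'

theorem eq_of_mem_Z_of_mem_Z {e e' : Sym2 V} {a : g.VH} (he : e ∈ G.edgeFinset)
    (he' : e' ∈ G.edgeFinset) (ha : a ∈ g.Z e) (ha' : a ∈ g.Z e') : e = e' := by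
  by_contra hne
  exact disjoint_left.mp (g.Z_disjoint e he e' he' hne) ha ha'

theorem adj_x_iff {e : Sym2 V} {w : V} {b : g.VH} (he : e ∈ G.edgeFinset) (hw : w ∈ e) :
    g.H.Adj (g.x e w) b ↔ b ∈ g.Y e ∨ b ∈ g.Z e ∨ b ∈ g.L e w ∨ b = g.q e 0 ∨ b = g.q e 1 := by
  rw [g.adj_iff]
  constructor
  · simp only [GadgetData.AdjSpec]
    grind (splits := 40) [x_eq_x_iff, q_eq_q_zero_or_q_one]
  · rintro (hb | hb | hb | rfl | rfl)
    · exact .inl <| .inr <| .inr <| .inr <| .inr <| .inl ⟨e, he, w, hw, rfl, .inl hb⟩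
    · exact .inl <| .inr <| .inr <| .inr <| .inr <| .inl ⟨e, he, w, hw, rfl, .inr <| .inl hb⟩
    · exact .inl <| .inr <| .inr <| .inr <| .inr <| .inl ⟨e, he, w, hw, rfl, .inr <| .inr hb⟩
    · exact .inr <| .inr <| .inr <| .inr <| .inr <| .inr <| .inr
        ⟨e, he, 0, rfl, .inr <| .inr ⟨w, hw, rfl⟩⟩
    · exact .inr <| .inr <| .inr <| .inr <| .inr <| .inr <| .inr
        ⟨e, he, 1, rfl, .inr <| .inr ⟨w, hw, rfl⟩⟩

theorem mem_of_adj_q {u v : V} {i : Fin 2} {b : g.VH} (he : s(u, v) ∈ G.edgeFinset)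
    (hadj : g.H.Adj (g.q s(u, v) i) b) :
    b ∈ g.Z s(u, v) ∨ b ∈ g.L s(u, v) u ∨ b ∈ g.L s(u, v) v ∨ b = g.x s(u, v) u ∨
      b = g.x s(u, v) v ∨ b = g.q s(u, v) 0 ∨ b = g.q s(u, v) 1 := by
  rw [g.adj_iff] at hadj
  simp only [GadgetData.AdjSpec] at hadj
  grind (splits := 40) [q_eq_q_iff, q_eq_q_zero_or_q_one]

theorem eq_sstar_of_adj_of_mem_Sleaves {a b : g.VH} (ha : a ∈ g.Sleaves)
    (hL : ∀ e ∈ G.edgeFinset, ∀ v ∈ e, a ∉ g.L e v) (hadj : g.H.Adj a b) : b = g.sstar := by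
  rw [g.adj_iff] at hadj
  simp only [GadgetData.AdjSpec] at hadj
  grind (splits := 40)

theorem mem_of_adj_of_mem_L {e : Sym2 V} {v : V} {a b : g.VH} (he : e ∈ G.edgeFinset)
    (hv : v ∈ e) (ha : a ∈ g.L e v) (hadj : g.H.Adj a b) :
    b ∈ ({g.sstar, g.orig v, g.x e v, g.q e 0, g.q e 1} : Finset g.VH) := by
  rw [g.adj_iff] at hadj
  simp only [GadgetData.AdjSpec] at hadj
  simp only [mem_insert, mem_singleton]
  grind (splits := 40) [eq_of_mem_L_of_mem_L, q_eq_q_zero_or_q_one]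

theorem eq_of_adj_of_mem_Aleaves {s a b : g.VH} (hs : s ∈ g.Acenters) (ha : a ∈ g.Aleaves s)
    (hadj : g.H.Adj a b) : b = s := by
  rw [g.adj_iff] at hadj
  simp only [GadgetData.AdjSpec] at hadj
  grind (splits := 40) [eq_of_mem_Aleaves_of_mem_Aleaves]

theorem eq_of_adj_of_mem_P {v : V} {a b : g.VH} (ha : a ∈ g.P v) (hadj : g.H.Adj a b) :
    b = g.orig v := by
  rw [g.adj_iff] at hadj
  simp only [GadgetData.AdjSpec] at hadj
  grind (splits := 40) [eq_of_mem_P_of_mem_P]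

theorem mem_of_adj_of_mem_Y {u v : V} {a b : g.VH} (he : s(u, v) ∈ G.edgeFinset)
    (ha : a ∈ g.Y s(u, v)) (hadj : g.H.Adj a b) :
    b ∈ ({g.orig u, g.orig v, g.x s(u, v) u, g.x s(u, v) v} : Finset g.VH) := by
  rw [g.adj_iff] at hadj
  simp only [GadgetData.AdjSpec] at hadj
  simp only [mem_insert, mem_singleton]
  grind (splits := 40) [eq_of_mem_Y_of_mem_Y]

theorem mem_of_adj_of_mem_Z {u v : V} {a b : g.VH} (he : s(u, v) ∈ G.edgeFinset)
    (ha : a ∈ g.Z s(u, v)) (hadj : g.H.Adj a b) :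
    b ∈ ({g.x s(u, v) u, g.x s(u, v) v, g.q s(u, v) 0, g.q s(u, v) 1} : Finset g.VH) := by
  rw [g.adj_iff] at hadj
  simp only [GadgetData.AdjSpec] at hadj
  simp only [mem_insert, mem_singleton]
  grind (splits := 40) [eq_of_mem_Z_of_mem_Z, q_eq_q_zero_or_q_one]

theorem adj_x_of_adj_x {e : Sym2 V} {w w' : V} {b : g.VH} (he : e ∈ G.edgeFinset) (hw : w ∈ e)
    (hw' : w' ∈ e) (hadj : g.H.Adj (g.x e w) b) (hb : b ∉ g.L e w) : g.H.Adj (g.x e w') b := by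
  rw [adj_x_iff he hw] at hadj
  rw [adj_x_iff he hw']
  tauto

theorem not_adj_x_of_mem_L {e : Sym2 V} {w w' : V} {l : g.VH} (he : e ∈ G.edgeFinset)
    (hw : w ∈ e) (hw' : w' ∈ e) (hne : w ≠ w') (hl : l ∈ g.L e w) : ¬ g.H.Adj (g.x e w') l := by
  rw [adj_x_iff he hw']
  grind [eq_of_mem_L_of_mem_L]

theorem card_nbhd_x_lt {e : Sym2 V} {w : V} (he : e ∈ G.edgeFinset) (hw : w ∈ e) :
    #(g.Y e ∪ g.Z e ∪ g.L e w ∪ {g.q e 0, g.q e 1}) < numColors G wt := by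
  have := g.card_Z e he
  calc #(g.Y e ∪ g.Z e ∪ g.L e w ∪ {g.q e 0, g.q e 1})
      ≤ #(g.Y e) + #(g.Z e) + #(g.L e w) + #({g.q e 0, g.q e 1} : Finset g.VH) := by
        grw [card_union_le, card_union_le, card_union_le]
    _ ≤ wt e + #(g.Z e) + wt e + 2 := by
        rw [g.card_Y e he, g.card_L e he w hw]
        grw [card_le_two]
    _ < numColors G wt := by omega

theorem mem_bigSet_of_isBVertex {c : g.VH → Fin (numColors G wt)} (hk : 7 ≤ numColors G wt)
    {a : g.VH} (ha : IsBVertex g.H c a) : a ∈ g.bigSet := by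
  have hsmall : ∀ S : Finset g.VH, #S ≤ 5 → (∀ b, g.H.Adj a b → b ∈ S) → False :=
    fun S hS hN => by
      have := ha.card_sub_one_le_card hN
      omega
  obtain ⟨p, hp, hap⟩ := g.parts_cover a
  simp only [GadgetData.parts, List.mem_cons, List.not_mem_nil, or_false] at hp
  rcases hp with rfl | rfl | rfl | rfl | rfl | rfl | rfl | rfl | rfl | rfl
  · simp_all [GadgetData.bigSet]
  · by_cases hL : ∃ e ∈ G.edgeFinset, ∃ v ∈ e, a ∈ g.L e v
    · obtain ⟨e, he, v, hv, haL⟩ := hL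
      exact (hsmall _ card_le_five fun b hb => mem_of_adj_of_mem_L he hv haL hb).elim
    · push Not at hL
      exact (hsmall {g.sstar} (by simp) fun b hb => by
        simpa using eq_sstar_of_adj_of_mem_Sleaves hap hL hb).elim
  · simp [GadgetData.bigSet, hap]
  · obtain ⟨s, hs, has⟩ := mem_biUnion.mp hap
    exact (hsmall {s} (by simp) fun b hb => by simpa using eq_of_adj_of_mem_Aleaves hs has hb).elim
  · simp_all [GadgetData.bigSet]
  · obtain ⟨v, -, hav⟩ := mem_biUnion.mp hap
    exact (hsmall {g.orig v} (by simp) fun b hb => by simpa using eq_of_adj_of_mem_P hav hb).elim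
  · simp [GadgetData.bigSet, hap]
  · obtain ⟨e, he, haY⟩ := mem_biUnion.mp hap
    induction e using Sym2.ind with
    | h u v => exact (hsmall _ (card_le_four.trans (by omega)) fun b hb =>
        mem_of_adj_of_mem_Y he haY hb).elim
  · obtain ⟨e, he, haZ⟩ := mem_biUnion.mp hap
    induction e using Sym2.ind with
    | h u v => exact (hsmall _ (card_le_four.trans (by omega)) fun b hb =>
        mem_of_adj_of_mem_Z he haZ hb).elim
  · simp [GadgetData.bigSet, hap]

def edgeBlock (g : Gadget V G wt) (e : Sym2 V) : Finset g.VH :=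
  (univ.filter (· ∈ e)).image (g.x e) ∪ {g.q e 0, g.q e 1}

theorem edgeBlock_mk (u v : V) :
    g.edgeBlock s(u, v) = {g.x s(u, v) u, g.x s(u, v) v, g.q s(u, v) 0, g.q s(u, v) 1} := by
  ext a
  simp only [edgeBlock, mem_union, mem_image, mem_filter, mem_univ, true_and, Sym2.mem_iff,
    mem_insert, mem_singleton]
  grind

theorem bigSet_subset :
    g.bigSet ⊆ {g.sstar} ∪ univ.image g.orig ∪ g.Acenters ∪ G.edgeFinset.biUnion g.edgeBlock := by
  intro a ha
  simp only [GadgetData.bigSet, GadgetData.Xset, GadgetData.Qset, edgeBlock, mem_union,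
    mem_biUnion] at ha ⊢
  grind

section ProperColoring

variable {c : g.VH → Fin (numColors G wt)} (hprop : ∀ ⦃a b : g.VH⦄, g.H.Adj a b → c a ≠ c b)
include hprop

theorem exists_mem_L_of_color_ne {e : Sym2 V} {w w' : V} (he : e ∈ G.edgeFinset) (hw : w ∈ e)
    (hw' : w' ∈ e) (hx : IsBVertex g.H c (g.x e w)) (hne : c (g.x e w') ≠ c (g.x e w)) :
    ∃ l ∈ g.L e w, c l = c (g.x e w') := by
  obtain ⟨l, hadj, hl⟩ := hx _ hne
  by_contra! hL
  exact hprop (adj_x_of_adj_x he hw hw' hadj fun h => hL l h hl) hl.symm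

theorem exists_mem_L_color_eq_of_color_eq {e : Sym2 V} {u v : V} (he : e ∈ G.edgeFinset)
    (hu : u ∈ e) (hv : v ∈ e) (huv : u ≠ v) (hxu : IsBVertex g.H c (g.x e u))
    (hxv : IsBVertex g.H c (g.x e v)) (hcx : c (g.x e u) = c (g.x e v))
    (hL : (g.L e u).Nonempty) : ∃ l₁ ∈ g.L e u, ∃ l₂ ∈ g.L e v, c l₁ = c l₂ := by
  obtain ⟨l₁, hl₁⟩ := hL
  have hnbhd : ∀ b, g.H.Adj (g.x e u) b → b ∈ g.Y e ∪ g.Z e ∪ g.L e u ∪ {g.q e 0, g.q e 1} :=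
    fun b hb => by
      have := (adj_x_iff he hu).mp hb
      simp only [mem_union, mem_insert, mem_singleton]
      tauto
  have hadj₁ : g.H.Adj (g.x e u) l₁ := (adj_x_iff he hu).mpr (by tauto)
  obtain ⟨l₂, hadj₂, hc₂⟩ := hxv (c l₁) (hcx ▸ (hprop hadj₁).symm)
  refine ⟨l₁, hl₁, l₂, ?_, hc₂.symm⟩
  by_contra hl₂
  have hinj := hxu.injOn_of_card_lt hnbhd (card_nbhd_x_lt he hu)
  have hl : l₂ = l₁ := hinj (hnbhd _ (adj_x_of_adj_x he hv hu hadj₂ hl₂)) (hnbhd _ hadj₁) hc₂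
  exact not_adj_x_of_mem_L he hu hv huv hl₁ (hl ▸ hadj₂)

theorem not_isBVertex_q {u v : V} (he : s(u, v) ∈ G.edgeFinset) (hwt : 1 ≤ wt s(u, v))
    (hxu : IsBVertex g.H c (g.x s(u, v) u)) (hxv : IsBVertex g.H c (g.x s(u, v) v)) (i : Fin 2) :
    ¬ IsBVertex g.H c (g.q s(u, v) i) := by
  intro hq
  have huv : u ≠ v := (SimpleGraph.mem_edgeFinset.mp he).ne
  have hu : u ∈ s(u, v) := Sym2.mem_mk_left u v
  have hv : v ∈ s(u, v) := Sym2.mem_mk_right u v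
  set S := (g.Z s(u, v) ∪ g.L s(u, v) u ∪ g.L s(u, v) v ∪
    {g.x s(u, v) u, g.x s(u, v) v, g.q s(u, v) 0, g.q s(u, v) 1}).erase (g.q s(u, v) i) with hSdef
  have hS : ∀ b, g.H.Adj (g.q s(u, v) i) b → b ∈ S := fun b hb =>
    mem_erase.mpr ⟨(g.H.ne_of_adj hb).symm, by
      have := mem_of_adj_q he hb
      simp only [mem_union, mem_insert, mem_singleton]
      tauto⟩
  have hcard : #S ≤ numColors G wt := by
    have hqi : g.q s(u, v) i ∈ g.Z s(u, v) ∪ g.L s(u, v) u ∪ g.L s(u, v) v ∪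
        {g.x s(u, v) u, g.x s(u, v) v, g.q s(u, v) 0, g.q s(u, v) 1} := by
      fin_cases i <;> simp
    rw [hSdef, card_erase_of_mem hqi]
    grw [card_union_le, card_union_le, card_union_le, card_le_four, g.card_L _ he u hu,
      g.card_L _ he v hv]
    have := g.card_Z _ he
    omega
  have hrepeats : numColors G wt + 1 ≤ #S := by
    by_cases hcx : c (g.x s(u, v) u) = c (g.x s(u, v) v)
    · obtain ⟨l₁, hl₁, l₂, hl₂, hc⟩ :=
        exists_mem_L_color_eq_of_color_eq hprop he hu hv huv hxu hxv hcx
          (card_pos.mp (by rw [g.card_L _ he u hu]; omega))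
      refine hq.add_one_le_card_of_two_repeats hS (a₂ := g.x s(u, v) u) ?_ ?_ ?_ ?_ ?_ hc hcx
      all_goals try simp only [hSdef, mem_sdiff, mem_erase, mem_union, mem_insert, mem_singleton]
      all_goals grind [x_eq_x_iff, eq_of_mem_L_of_mem_L]
    · obtain ⟨l₁, hl₁, hc₁⟩ := exists_mem_L_of_color_ne hprop he hu hv hxu (Ne.symm hcx)
      obtain ⟨l₂, hl₂, hc₂⟩ := exists_mem_L_of_color_ne hprop he hv hu hxv hcx
      refine hq.add_one_le_card_of_two_repeats hS ?_ ?_ ?_ ?_ ?_ hc₁ hc₂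
      all_goals try simp only [hSdef, mem_sdiff, mem_erase, mem_union, mem_insert, mem_singleton]
      all_goals grind [x_eq_x_iff, eq_of_mem_L_of_mem_L]
  omega

theorem card_lt_numColors (hwt : ∀ e ∈ G.edgeFinset, 1 ≤ wt e) {u v : V}
    (he : s(u, v) ∈ G.edgeFinset) {D : Finset g.VH} (hD : ∀ a ∈ D, IsBVertex g.H c a)
    (hxu : g.x s(u, v) u ∈ D) (hxv : g.x s(u, v) v ∈ D) : #D < numColors G wt := by
  have hW : wt s(u, v) ≤ totW G wt := single_le_sum (fun _ _ => Nat.zero_le _) he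
  have hm : 0 < #G.edgeFinset := card_pos.mpr ⟨_, he⟩
  have hk : 7 ≤ numColors G wt := by
    have := hwt _ he
    unfold numColors
    omega
  have hsplit := card_le_card_add_sum_card_inter fun a ha =>
    g.bigSet_subset (mem_bigSet_of_isBVertex hk (hD a ha))
  have hrest : #({g.sstar} ∪ univ.image g.orig ∪ g.Acenters) ≤
      1 + Fintype.card V + (2 * totW G wt + 1) := by
    grw [card_union_le, card_union_le, card_singleton, card_image_le, card_univ, g.card_Acenters]
  have hblocks : ∑ e ∈ G.edgeFinset, #(D ∩ g.edgeBlock e) + 1 ≤ 3 * #G.edgeFinset := by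
    refine sum_add_one_le_mul_card he (fun e he' => ?_) ?_
    · induction e using Sym2.ind with
      | h u' v' =>
        rw [edgeBlock_mk]
        exact card_inter_le_three fun hx hy hq =>
          not_isBVertex_q hprop he' (hwt _ he') (hD _ hx) (hD _ hy) 0 (hD _ hq)
    · rw [edgeBlock_mk]
      refine (card_inter_le_two ?_ ?_).trans_lt (by norm_num) <;>
        exact fun hq => not_isBVertex_q hprop he (hwt _ he) (hD _ hxu) (hD _ hxv) _ (hD _ hq)
  unfold numColors
  omega

end ProperColoring

end Gadget

theorem xvertices_not_bVertices_with_distinct_colors_general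
    {V : Type*} [Fintype V] [DecidableEq V] (G : SimpleGraph V) [DecidableRel G.Adj]
    (wt : Sym2 V → ℕ)
    (hwt : ∀ e ∈ G.edgeFinset, 1 ≤ wt e)
    (g : Gadget V G wt)
    (c : g.VH → Fin (numColors G wt)) (hc : IsBColoring g.H (numColors G wt) c) :
    ∀ e ∈ G.edgeFinset, ∀ u v : V, e = s(u, v) →
      IsBVertex g.H c (g.x e u) → IsBVertex g.H c (g.x e v) →
      c (g.x e u) = c (g.x e v) := by
  classical
  rintro e he u v rfl hxu hxv
  exfalso
  let D := univ.filter (IsBVertex g.H c)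
  have hle : numColors G wt ≤ #D := hc.le_card fun a ha => by simp [D, ha]
  have hlt : #D < numColors G wt :=
    g.card_lt_numColors hc.1 hwt he (by simp [D]) (by simp [D, hxu]) (by simp [D, hxv])
  omega

/-- In any b-coloring of `H` with `k` colors, for every edge `e = uv`
of `G`, if both `x_{e,u}` and `x_{e,v}` are b-vertices, then they have the same color. -/
theorem xvertices_not_bVertices_with_distinct_colors
    {V : Type*} [Fintype V] [DecidableEq V] (G : SimpleGraph V) [DecidableRel G.Adj]
    (wt : Sym2 V → ℕ) (hconn : G.Connected)
    (hwt : ∀ e ∈ G.edgeFinset, 1 ≤ wt e)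
    (heven : ∀ v : V, Even (vertW G wt v))
    (g : Gadget V G wt)
    (c : g.VH → Fin (numColors G wt)) (hc : IsBColoring g.H (numColors G wt) c) :
    ∀ e ∈ G.edgeFinset, ∀ u v : V, e = s(u, v) →
      IsBVertex g.H c (g.x e u) → IsBVertex g.H c (g.x e v) →
      c (g.x e u) = c (g.x e v) :=
  xvertices_not_bVertices_with_distinct_colors_general G wt hwt g c hc
end
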